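/- Let m ≥ 2 and let H be a normalized symmetric real Hadamard matrix of order 4m. Let ε ∈ {1, −1} and set b = −1 + 1/(2m−2) + ε·i·√(4m−5)/(2m−2). Define the (4m−1)×(4m−1) matrix V, indexed by 2 ≤ i,j ≤ 4m (i.e., the first row and column of H are discarded), by: V_ij = 1 if i ≠ j and H_ij = 1; V_ij = b if i ≠ j and H_ij = −1; V_ii = −b if H_ii = 1; V_ii = −1 if H_ii = −1. Then V is a complex Hadamard matrix of order 4m−1. -/

import Mathlib

open Matrix

/-- `H` is a complex Hadamard matrix: unimodular entries and `H Hᴴ = n • I`. -/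
def IsCHadamard {n : Type*} [Fintype n] [DecidableEq n] (H : Matrix n n ℂ) : Prop :=
  (∀ i j, ‖H i j‖ = 1) ∧
    H * H.conjTranspose = (Fintype.card n : ℂ) • 1

/-- `H` is a real Hadamard matrix of order `n`: `±1` entries with `H Hᵀ = n I`. -/
def IsRealHadamard {n : ℕ} (H : Matrix (Fin n) (Fin n) ℝ) : Prop :=
  (∀ i j, H i j = 1 ∨ H i j = -1) ∧ H * H.transpose = (n : ℝ) • 1

/-- A real Hadamard matrix is normalized if its first row and column consist of `1`s. -/
def IsNormalizedRH {n : ℕ} [NeZero n] (H : Matrix (Fin n) (Fin n) ℝ) : Prop :=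
  (∀ j, H 0 j = 1) ∧ (∀ i, H i 0 = 1)

/-! Write `n = 4m`, `J` for the all-ones matrix and `C` for the core of `H` (`H` without its first
row and column). Orthogonality of the rows of the normalized matrix `H` gives `C Cᵀ = n I - J` and
`C J = -J`, and `C = Cᵀ` by symmetry. The affine map `x ↦ (1 + b)/2 + (1 - b)/2 · x` sends `1 ↦ 1`
and `-1 ↦ b`, and on the diagonal `V` is this map shifted by `-(1 + b)`, so
`V = (1 + b)/2 · J + (1 - b)/2 · C - (1 + b) I`. Expanding `V V*` with the relations above leaves a
combination of `J`, `C` and `I`: `|b| = 1` kills the coefficient of `C`, and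
`Re b = (n - 6)/(4 - n)` is exactly what kills the coefficient of `J` and makes that of `I` equal
to `n - 1`. -/

theorem Fintype.sum_comp_eq_sum_sub {ι κ M : Type*} [Fintype ι] [Fintype κ] [AddCommGroup M]
    {e : κ → ι} {i₀ : ι} (he : Function.Injective e) (hrange : Set.range e = {i₀}ᶜ)
    (g : ι → M) : ∑ k, g (e k) = ∑ i, g i - g i₀ := by
  classical
  have himage : Finset.univ.map ⟨e, he⟩ = Finset.univ.erase i₀ := by
    ext i
    rw [Finset.mem_erase, ← Set.mem_compl_singleton_iff, ← hrange]
    simp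
  rw [← Finset.sum_erase_eq_sub (Finset.mem_univ i₀), ← himage, Finset.sum_map]
  rfl

theorem Fin.injective_cast_succ {N n : ℕ} (h : N + 1 = n) :
    Function.Injective (fun i : Fin N => Fin.cast h i.succ) :=
  (Fin.cast_injective h).comp (Fin.succ_injective N)

theorem Fin.range_cast_succ {N n : ℕ} [NeZero n] (h : N + 1 = n) :
    Set.range (fun i : Fin N => Fin.cast h i.succ) = {0}ᶜ := by
  subst h
  simp [Fin.range_succ]

namespace IsRealHadamard

variable {n : ℕ} {H : Matrix (Fin n) (Fin n) ℝ} {κ : Type*} [Fintype κ]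
  {e : κ → Fin n} {i₀ : Fin n}

theorem mul_transpose_apply (hH : IsRealHadamard H) (i j : Fin n) :
    ∑ k, H i k * H j k = if i = j then (n : ℝ) else 0 := by
  simpa [mul_apply, one_apply] using congrFun₂ hH.2 i j

theorem submatrix_mul_transpose [DecidableEq κ] (hH : IsRealHadamard H) (hcol : ∀ i, H i i₀ = 1)
    (he : Function.Injective e) (hrange : Set.range e = {i₀}ᶜ) :
    H.submatrix e e * (H.submatrix e e)ᵀ = (n : ℝ) • 1 - of 1 := by
  ext k l
  simp only [mul_apply, submatrix_apply, transpose_apply]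
  rw [Fintype.sum_comp_eq_sum_sub he hrange (fun j => H (e k) j * H (e l) j),
    hH.mul_transpose_apply, hcol, hcol]
  simp [one_apply, he.eq_iff]

theorem submatrix_mul_of_one (hH : IsRealHadamard H) (hrow : ∀ j, H i₀ j = 1)
    (hcol : ∀ i, H i i₀ = 1) (he : Function.Injective e) (hrange : Set.range e = {i₀}ᶜ) :
    H.submatrix e e * of 1 = -of 1 := by
  have hne : ∀ k, e k ≠ i₀ := fun k =>
    Set.mem_compl_singleton_iff.mp (hrange ▸ Set.mem_range_self k)
  ext k l
  have hrowsum : ∑ j, H (e k) j = 0 := by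
    simpa [hrow, hne k] using hH.mul_transpose_apply (e k) i₀
  simp only [mul_apply, submatrix_apply, of_apply, Pi.one_apply, mul_one, Matrix.neg_apply]
  rw [Fintype.sum_comp_eq_sum_sub he hrange (H (e k)), hrowsum, hcol, zero_sub]

end IsRealHadamard

section HadamardTwist

variable {κ : Type*} [DecidableEq κ]

noncomputable def hadamardTwist (b : ℂ) (C : Matrix κ κ ℂ) : Matrix κ κ ℂ :=
  ((1 + b) / 2) • of 1 + ((1 - b) / 2) • C - (1 + b) • 1

theorem of_ite_eq_hadamardTwist {ι : Type*} (H : Matrix ι ι ℝ)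
    (hH : ∀ i j, H i j = 1 ∨ H i j = -1) (e : κ → ι) (b : ℂ) :
    of (fun i j => if i = j then (if H (e i) (e i) = 1 then -b else -1)
        else (if H (e i) (e j) = 1 then 1 else b))
      = hadamardTwist b ((H.submatrix e e).map (algebraMap ℝ ℂ)) := by
  ext i j
  have hne : (-1 : ℝ) ≠ 1 := by norm_num
  rcases eq_or_ne i j with rfl | hij
  · rcases hH (e i) (e i) with h | h <;> simp [hadamardTwist, h, hne] <;> ring
  · rcases hH (e i) (e j) with h | h <;> simp [hadamardTwist, h, hij, hne] <;> ring

variable [Fintype κ]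

theorem hadamardTwist_mul_conjTranspose {n : ℕ} (hn : Fintype.card κ + 1 = n)
    (C : Matrix κ κ ℂ) (hC : Cᴴ = C) (hCC : C * C = (n : ℂ) • 1 - of 1) (hCJ : C * of 1 = -of 1)
    {b : ℂ} (hb : b * star b = 1) (hre : (b + star b) * (4 - n) = 2 * (n - 6)) :
    hadamardTwist b C * (hadamardTwist b C)ᴴ = (Fintype.card κ : ℂ) • 1 := by
  have hcard : (Fintype.card κ : ℂ) = n - 1 := by rw [← hn]; push_cast; ring
  have hJ : (of 1 : Matrix κ κ ℂ)ᴴ = of 1 := by ext; simp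
  have hJJ : (of 1 : Matrix κ κ ℂ) * of 1 = (Fintype.card κ : ℂ) • of 1 := by
    ext; simp [mul_apply]
  have hJC : of 1 * C = -of 1 := by
    rw [← hC, ← hJ, ← conjTranspose_mul, hCJ, conjTranspose_neg]
  simp only [hadamardTwist, conjTranspose_sub, conjTranspose_add, conjTranspose_smul,
    conjTranspose_one, hJ, hC, star_div₀, star_add, star_sub, star_one, star_ofNat,
    add_mul, mul_add, sub_mul, mul_sub, Matrix.smul_mul, Matrix.mul_smul, smul_smul,
    Matrix.one_mul, Matrix.mul_one, hJJ, hJC, hCJ, hCC, hcard]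
  match_scalars
  · linear_combination (-1 / 4 : ℂ) * hre + ((n - 4) / 4 : ℂ) * hb
  · linear_combination (1 / 4 : ℂ) * hre + ((n + 4) / 4 : ℂ) * hb
  · linear_combination hb

theorem hadamardTwist_map_mul_conjTranspose {n : ℕ} (hn : Fintype.card κ + 1 = n)
    (A : Matrix κ κ ℝ) (hA : Aᵀ = A) (hAA : A * Aᵀ = (n : ℝ) • 1 - of 1) (hAJ : A * of 1 = -of 1)
    {b : ℂ} (hb : ‖b‖ = 1) (hre : b.re * (4 - n) = n - 6) :
    hadamardTwist b (A.map (algebraMap ℝ ℂ)) * (hadamardTwist b (A.map (algebraMap ℝ ℂ)))ᴴ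
      = (Fintype.card κ : ℂ) • 1 := by
  apply hadamardTwist_mul_conjTranspose hn
  · ext i j
    simpa using congrArg (algebraMap ℝ ℂ) (congrFun₂ hA i j)
  · rw [hA] at hAA
    rw [← Matrix.map_mul, hAA]
    ext i j
    by_cases hij : i = j <;> simp [one_apply, hij]
  · ext i j
    simpa [mul_apply] using congrArg (algebraMap ℝ ℂ) (congrFun₂ hAJ i j)
  · rw [Complex.star_def, Complex.mul_conj, Complex.normSq_eq_norm_sq, hb]
    norm_num
  · rw [Complex.star_def, Complex.add_conj]
    have h2re : 2 * b.re * (4 - n) = 2 * ((n : ℝ) - 6) := by linear_combination 2 * hre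
    exact_mod_cast h2re

end HadamardTwist

noncomputable def hadamardPhase (m : ℕ) (ε : ℝ) : ℂ :=
  -1 + 1 / (2 * m - 2) + ε * Complex.I * Real.sqrt (4 * m - 5) / (2 * m - 2)

section HadamardPhase

variable {m : ℕ} {ε : ℝ}

theorem hadamardPhase_eq_re_add_im (m : ℕ) (ε : ℝ) :
    hadamardPhase m ε = ((-1 + 1 / (2 * m - 2) : ℝ) : ℂ)
      + ((ε * Real.sqrt (4 * m - 5) / (2 * m - 2) : ℝ) : ℂ) * Complex.I := by
  rw [hadamardPhase]
  push_cast
  ring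

theorem hadamardPhase_re : (hadamardPhase m ε).re = -1 + 1 / (2 * m - 2) := by
  rw [hadamardPhase_eq_re_add_im, Complex.add_re, Complex.ofReal_re, Complex.mul_I_re,
    Complex.ofReal_im, neg_zero, add_zero]

theorem hadamardPhase_im :
    (hadamardPhase m ε).im = ε * Real.sqrt (4 * m - 5) / (2 * m - 2) := by
  rw [hadamardPhase_eq_re_add_im, Complex.add_im, Complex.ofReal_im, Complex.mul_I_im,
    Complex.ofReal_re, zero_add]

theorem norm_hadamardPhase (hm : 2 ≤ m) (hε : ε = 1 ∨ ε = -1) : ‖hadamardPhase m ε‖ = 1 := by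
  have hm' : (2 : ℝ) ≤ m := by exact_mod_cast hm
  have hε2 : ε ^ 2 = 1 := by rcases hε with rfl | rfl <;> norm_num
  have hsq : Real.sqrt (4 * m - 5) ^ 2 = 4 * m - 5 := Real.sq_sqrt (by linarith)
  have hden : (m - 1 : ℝ) ≠ 0 := by linarith
  rw [Complex.norm_def, Real.sqrt_eq_one, Complex.normSq_apply, hadamardPhase_re,
    hadamardPhase_im, ← sq, ← sq, div_pow, mul_pow, hε2, hsq, one_mul]
  field_simp
  ring

theorem hadamardPhase_re_mul_four_sub (hm : 2 ≤ m) :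
    (hadamardPhase m ε).re * (4 - (4 * m : ℕ)) = (4 * m : ℕ) - 6 := by
  have hm1 : (m : ℝ) - 1 ≠ 0 := sub_ne_zero.mpr (by exact_mod_cast (by omega : m ≠ 1))
  rw [hadamardPhase_re]
  push_cast
  field_simp
  ring

end HadamardPhase

theorem stmt10 (m : ℕ) (hm : 2 ≤ m)
    (H : Matrix (Fin (4 * m)) (Fin (4 * m)) ℝ)
    (hHad : IsRealHadamard H)
    (hnorm : @IsNormalizedRH (4 * m) ⟨by omega⟩ H)
    (hsym : H.transpose = H)
    (ε : ℝ) (hε : ε = 1 ∨ ε = -1)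
    (b : ℂ)
    (hb : b = -1 + 1 / (2 * m - 2) + ε * Complex.I * Real.sqrt (4 * m - 5) / (2 * m - 2))
    (e : Fin (4 * m - 1) → Fin (4 * m))
    (he : ∀ i, e i = Fin.cast (by omega : 4 * m - 1 + 1 = 4 * m) i.succ) :
    IsCHadamard (Matrix.of fun i j : Fin (4 * m - 1) =>
      if i = j then (if H (e i) (e i) = 1 then -b else -1)
      else (if H (e i) (e j) = 1 then 1 else b)) := by
  have : NeZero (4 * m) := ⟨by omega⟩
  have hN : 4 * m - 1 + 1 = 4 * m := by omega
  have he' : e = fun i : Fin (4 * m - 1) => Fin.cast hN i.succ := funext he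
  have hinj : Function.Injective e := he' ▸ Fin.injective_cast_succ hN
  have hrange : Set.range e = {0}ᶜ := he' ▸ Fin.range_cast_succ hN
  have hbnorm : ‖b‖ = 1 := hb ▸ norm_hadamardPhase hm hε
  have hre : b.re * (4 - (4 * m : ℕ)) = (4 * m : ℕ) - 6 := hb ▸ hadamardPhase_re_mul_four_sub hm
  refine ⟨fun i j => ?_, ?_⟩
  · simp only [of_apply]
    split_ifs <;> simp [hbnorm]
  · rw [of_ite_eq_hadamardTwist H hHad.1 e b]
    exact hadamardTwist_map_mul_conjTranspose (by simpa using hN) _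
      (by rw [transpose_submatrix, hsym]) (hHad.submatrix_mul_transpose hnorm.2 hinj hrange)
      (hHad.submatrix_mul_of_one hnorm.1 hnorm.2 hinj hrange) hbnorm hre
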